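/- arXiv:1504.08299 — 3 statements merged into one kernel-verified Lean document; each statement's English description precedes it below -/
import Mathlib

section
/- Let C, X be bounded operators on a Hilbert space H with C a contraction (C*C ≤ I_H) and 0 < m·I_H ≤ X ≤ M·I_H, and let f be a concave operator monotone function on [m,M]. With μ_f = (f(M)-f(m))/(M-m), ν_f = (Mf(m)-mf(M))/(M-m), and γ_f = max_{m ≤ t ≤ M} f(t)/(μ_f t + ν_f), one has γ_f·(C* f(X) C + f(m)(I_H - C*C)) ≥ f(C* X C). -/
/-!
Put `Y = C* X C + m (1 - C* C)`, so that `C* X C ≤ Y` and `m ≤ Y ≤ M`, and let `ℓ` be the chord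
of `f` over `[m, M]`. Operator monotonicity gives `f(C* X C) ≤ f(Y)`, the definition of `γ` gives
`f ≤ γ ℓ` on `[m, M]`, hence `f(Y) ≤ γ ℓ(Y)`. Since `ℓ` is affine,
`ℓ(Y) = C* ℓ(X) C + ℓ(m) (1 - C* C)` with `ℓ(m) = f(m)`, and concavity gives `ℓ ≤ f` on `[m, M]`,
hence `C* ℓ(X) C ≤ C* f(X) C`.
-/

open Set

/-- The paper's `μ_f t + ν_f`: the line through `(a, f a)` and `(b, f b)`. -/
noncomputable def chord (f : ℝ → ℝ) (a b : ℝ) (t : ℝ) : ℝ :=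
  (f b - f a) / (b - a) * t + (b * f a - a * f b) / (b - a)

@[fun_prop]
theorem continuous_chord (f : ℝ → ℝ) (a b : ℝ) : Continuous (chord f a b) := by
  unfold chord
  fun_prop

theorem chord_left (f : ℝ → ℝ) {a b : ℝ} (hab : a ≠ b) : chord f a b a = f a := by
  have : b - a ≠ 0 := sub_ne_zero.2 hab.symm
  unfold chord
  field_simp
  ring

theorem ConcaveOn.chord_le {f : ℝ → ℝ} {a b t : ℝ} (hf : ConcaveOn ℝ (Icc a b) f) (hab : a < b)
    (ht : t ∈ Icc a b) : chord f a b t ≤ f t := by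
  have hba : 0 < b - a := sub_pos.2 hab
  have key := hf.2 (left_mem_Icc.2 hab.le) (right_mem_Icc.2 hab.le)
    (div_nonneg (sub_nonneg.2 ht.2) hba.le) (div_nonneg (sub_nonneg.2 ht.1) hba.le)
    (by field_simp; ring)
  have h_arg : ((b - t) / (b - a)) • a + ((t - a) / (b - a)) • b = t := by
    simp only [smul_eq_mul]
    field_simp
    ring
  have h_val : ((b - t) / (b - a)) • f a + ((t - a) / (b - a)) • f b = chord f a b t := by
    unfold chord
    simp only [smul_eq_mul]
    field_simp
    ring
  rwa [h_arg, h_val] at key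

section FunctionalCalculus

variable {A : Type*} [CStarAlgebra A]

theorem cfc_mul_add_const {a : A} (ha : IsSelfAdjoint a) (μ ν : ℝ) :
    cfc (fun t : ℝ => μ * t + ν) a = μ • a + ν • 1 := by
  rw [cfc_add_const ν (fun t : ℝ => μ * t) a, cfc_const_mul_id μ a, Algebra.algebraMap_eq_smul_one]

theorem cfc_mul_add_const_star_mul_mul_add_smul {C X : A} (hX : IsSelfAdjoint X) (μ ν c : ℝ) :
    cfc (fun t : ℝ => μ * t + ν) (star C * X * C + c • (1 - star C * C)) =
      star C * cfc (fun t : ℝ => μ * t + ν) X * C + (μ * c + ν) • (1 - star C * C) := by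
  have hY : IsSelfAdjoint (star C * X * C + c • (1 - star C * C)) :=
    (hX.conjugate' C).add
      ((IsSelfAdjoint.all c).smul ((IsSelfAdjoint.one A).sub (.star_mul_self C)))
  rw [cfc_mul_add_const hY, cfc_mul_add_const hX]
  simp only [mul_add, add_mul, mul_smul_comm, smul_mul_assoc, mul_one, smul_add, smul_sub]
  module

variable [PartialOrder A] [StarOrderedRing A]

theorem spectrum_subset_Icc_of_smul_one_le {a : A} {m M : ℝ} (hm : m • 1 ≤ a) (hM : a ≤ M • 1) :
    spectrum ℝ a ⊆ Icc m M := by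
  have ha : IsSelfAdjoint a := by
    simpa using (IsSelfAdjoint.of_nonneg (sub_nonneg.2 hm)).add
      ((IsSelfAdjoint.all m).smul (IsSelfAdjoint.one A))
  rw [← Algebra.algebraMap_eq_smul_one] at hm hM
  exact fun t ht => ⟨(algebraMap_le_iff_le_spectrum ha).1 hm t ht,
    (le_algebraMap_iff_spectrum_le ha).1 hM t ht⟩

/-- Off its continuity domain `cfc f a` is the junk value `0`, which cannot dominate
`f r • 1 > 0`. -/
theorem continuousOn_spectrum_of_cfc_smul_one_le [Nontrivial A] {f : ℝ → ℝ} {r : ℝ} {a : A}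
    (hfr : 0 < f r) (h : cfc f (r • 1 : A) ≤ cfc f a) : ContinuousOn f (spectrum ℝ a) := by
  by_contra hcont
  rw [cfc_apply_of_not_continuousOn a hcont, ← Algebra.algebraMap_eq_smul_one, cfc_algebraMap,
    Algebra.algebraMap_eq_smul_one] at h
  exact (smul_pos hfr zero_lt_one).not_ge h

theorem smul_one_le_star_mul_mul_add_smul {C X : A} {m : ℝ} (hX : m • 1 ≤ X) :
    m • 1 ≤ star C * X * C + m • (1 - star C * C) :=
  calc m • (1 : A) = star C * (m • 1) * C + m • (1 - star C * C) := by
        simp only [mul_smul_comm, smul_mul_assoc, mul_one, smul_sub]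
        abel
    _ ≤ star C * X * C + m • (1 - star C * C) := by
        gcongr
        exact star_left_conjugate_le_conjugate hX C

theorem star_mul_mul_add_smul_le_smul_one {C X : A} {m M : ℝ} (hmM : m ≤ M)
    (hC : star C * C ≤ 1) (hX : X ≤ M • 1) :
    star C * X * C + m • (1 - star C * C) ≤ M • 1 :=
  calc star C * X * C + m • (1 - star C * C)
      ≤ star C * (M • 1) * C + M • (1 - star C * C) :=
        add_le_add (star_left_conjugate_le_conjugate hX C)
          (smul_le_smul_of_nonneg_right hmM (sub_nonneg.2 hC))
    _ = M • 1 := by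
        simp only [mul_smul_comm, smul_mul_assoc, mul_one, smul_sub]
        abel

end FunctionalCalculus


/-- `f(C* X C) ≤ γ_f (C* f(X) C + f(m)(1 - C* C))` for a contraction `C`,
`0 < m • 1 ≤ X ≤ M • 1` and a concave operator monotone function `f` on `[m, M]`. -/
theorem reverse_jensen_contraction
    {𝒜 : Type*} [CStarAlgebra 𝒜] [PartialOrder 𝒜] [StarOrderedRing 𝒜]
    (m M : ℝ) (hm : 0 < m) (hmM : m < M) (f : ℝ → ℝ)
    (hf_concave : ConcaveOn ℝ (Set.Icc m M) f)
    (hf_mono : ∀ a b : 𝒜, 0 ≤ a → a ≤ b → cfc f a ≤ cfc f b)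
    (hden : ∀ t ∈ Set.Icc m M,
      0 < (f M - f m) / (M - m) * t + (M * f m - m * f M) / (M - m))
    (γ : ℝ)
    (hγ : IsGreatest ((fun t => f t /
        ((f M - f m) / (M - m) * t + (M * f m - m * f M) / (M - m))) '' Set.Icc m M) γ)
    (C X : 𝒜) (hC : star C * C ≤ 1)
    (hXm : m • (1 : 𝒜) ≤ X) (hXM : X ≤ M • (1 : 𝒜)) :
    cfc f (star C * X * C) ≤ γ • (star C * cfc f X * C + f m • (1 - star C * C)) := by
  rcases subsingleton_or_nontrivial 𝒜 with h𝒜 | h𝒜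
  · exact (Subsingleton.elim _ _).le
  have hfm : 0 < f m := chord_left f hmM.ne ▸ hden m (left_mem_Icc.2 hmM.le)
  have hγ_nonneg : 0 ≤ γ := by
    have h : f m / chord f m M m ≤ γ := hγ.2 ⟨m, left_mem_Icc.2 hmM.le, rfl⟩
    rw [chord_left f hmM.ne, div_self hfm.ne'] at h
    exact zero_le_one.trans h
  have hf_le : ∀ t ∈ Icc m M, f t ≤ γ * chord f m M t :=
    fun t ht => (div_le_iff₀ (hden t ht)).1 (hγ.2 ⟨t, ht, rfl⟩)
  have hm_one : 0 ≤ m • (1 : 𝒜) := smul_nonneg hm.le zero_le_one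
  have hX : 0 ≤ X := hm_one.trans hXm
  set Y := star C * X * C + m • (1 - star C * C)
  have hYm : m • 1 ≤ Y := smul_one_le_star_mul_mul_add_smul hXm
  have hspecY := spectrum_subset_Icc_of_smul_one_le hYm
    (star_mul_mul_add_smul_le_smul_one hmM.le hC hXM)
  have hspecX := spectrum_subset_Icc_of_smul_one_le hXm hXM
  have hcont : ∀ a : 𝒜, m • 1 ≤ a → ContinuousOn f (spectrum ℝ a) :=
    fun a ha => continuousOn_spectrum_of_cfc_smul_one_le hfm (hf_mono _ _ hm_one ha)
  calc cfc f (star C * X * C)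
      ≤ cfc f Y := hf_mono _ _ (star_left_conjugate_nonneg hX C)
        (le_add_of_nonneg_right (smul_nonneg hm.le (sub_nonneg.2 hC)))
    _ ≤ cfc (fun t => γ * chord f m M t) Y :=
        cfc_mono (fun t ht => hf_le t (hspecY ht)) (hcont Y hYm)
    _ = γ • (star C * cfc (chord f m M) X * C + f m • (1 - star C * C)) := by
        rw [cfc_const_mul ..]
        unfold chord
        rw [cfc_mul_add_const_star_mul_mul_add_smul (.of_nonneg hX), ← chord, chord_left f hmM.ne]
    _ ≤ γ • (star C * cfc f X * C + f m • (1 - star C * C)) := by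
        gcongr
        exact star_left_conjugate_le_conjugate
          (cfc_mono (fun t ht => hf_concave.chord_le hmM (hspecX ht)) (hg := hcont X hXm)) C
end

section
/- Let Φ be a unital positive linear map from B(H) to B(K), let A_1,...,A_n be positive operators with 0 < m·I_H ≤ A_j ≤ M·I_H, and let ω_1,...,ω_n ∈ [0,1] with ∑_j ω_j = 1. Then log((1/e)·(M^m/m^M)^{1/(M-m)}·L(m,M))·I_K + Φ(∑_{j=1}^n ω_j log A_j) ≥ log(∑_{j=1}^n ω_j Φ(A_j)), where L(a,b) = (b-a)/(log b − log a) for a ≠ b and L(a,a) = a is the logarithmic mean. -/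
/-!
Put `α = 1 / L(m, M)` and let `t ↦ α t + β` be the chord of `log` over `[m, M]`. Concavity puts
the chord below `log` on `[m, M]`, while the tangent line of slope `α` gives
`log t ≤ α t - 1 - log α` for all `t > 0`, i.e. `log` exceeds its chord by at most
`C = -1 - β - log α`, which is the logarithm of the constant in the statement. Both scalar bounds
lift to operators with spectrum in `[m, M]`, and since `Φ` is unital, positive and linear,
`α X + β ≤ Φ (∑ ω_j log A_j)` for `X = ∑ ω_j Φ(A_j)`, whence `log X ≤ C + α X + β` gives the claim.
-/

open Real Set

noncomputable def logChordSlope (m M : ℝ) : ℝ := (log M - log m) / (M - m)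

noncomputable def logChordIntercept (m M : ℝ) : ℝ := (M * log m - m * log M) / (M - m)

lemma logChordSlope_pos {m M : ℝ} (hm : 0 < m) (hmM : m < M) : 0 < logChordSlope m M :=
  div_pos (sub_pos.2 (log_lt_log hm hmM)) (sub_pos.2 hmM)

lemma logChord_le_log {m M t : ℝ} (hm : 0 < m) (hmM : m < M) (hmt : m ≤ t) (htM : t ≤ M) :
    logChordSlope m M * t + logChordIntercept m M ≤ log t := by
  have hMm : 0 < M - m := sub_pos.2 hmM
  have hconc := strictConcaveOn_log_Ioi.concaveOn.2 (mem_Ioi.2 hm) (mem_Ioi.2 (hm.trans hmM))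
    (div_nonneg (sub_nonneg.2 htM) hMm.le) (div_nonneg (sub_nonneg.2 hmt) hMm.le)
    (by field_simp; ring)
  have hpoint : ((M - t) / (M - m)) • m + ((t - m) / (M - m)) • M = t := by
    simp only [smul_eq_mul]; field_simp; ring
  have hvalue : ((M - t) / (M - m)) • log m + ((t - m) / (M - m)) • log M =
      logChordSlope m M * t + logChordIntercept m M := by
    simp only [smul_eq_mul, logChordSlope, logChordIntercept]; field_simp; ring
  rwa [hpoint, hvalue] at hconc

lemma log_le_mul_sub_one_sub_log {α t : ℝ} (hα : 0 < α) (ht : 0 < t) :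
    log t ≤ α * t - 1 - log α := by
  have := log_le_sub_one_of_pos (mul_pos hα ht)
  rw [log_mul hα.ne' ht.ne'] at this
  linarith

lemma log_reverseConstant_eq {m M : ℝ} (hm : 0 < m) (hmM : m < M) :
    log ((exp 1)⁻¹ * (M ^ m / m ^ M) ^ (1 / (M - m)) * ((M - m) / (log M - log m))) =
      -1 - logChordIntercept m M - log (logChordSlope m M) := by
  have hM : 0 < M := hm.trans hmM
  have hMm : 0 < M - m := sub_pos.2 hmM
  have hlog : 0 < log M - log m := sub_pos.2 (log_lt_log hm hmM)
  rw [log_mul (by positivity) (by positivity), log_mul (by positivity) (by positivity),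
    log_inv, log_exp, log_rpow (by positivity), log_div (by positivity) (by positivity),
    log_rpow hM, log_rpow hm, log_div hMm.ne' hlog.ne', logChordIntercept, logChordSlope,
    log_div hlog.ne' hMm.ne']
  field_simp
  ring

section CStarAlgebra

variable {𝒜 : Type*} [CStarAlgebra 𝒜]

lemma cfc_affine (α β : ℝ) {a : 𝒜} (ha : IsSelfAdjoint a) :
    cfc (fun t : ℝ => α * t + β) a = α • a + β • (1 : 𝒜) := by
  rw [cfc_add (a := a) (fun t => α * t) (fun _ => β), cfc_const_mul_id α a ha, cfc_const β a ha,
    Algebra.algebraMap_eq_smul_one]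

variable [PartialOrder 𝒜] [StarOrderedRing 𝒜]

lemma IsSelfAdjoint.of_smul_one_le {r : ℝ} {a : 𝒜} (h : r • (1 : 𝒜) ≤ a) : IsSelfAdjoint a := by
  have hr : IsSelfAdjoint (r • (1 : 𝒜)) := by
    simpa only [Algebra.algebraMap_eq_smul_one] using IsSelfAdjoint.algebraMap 𝒜 (.all r)
  simpa using (IsSelfAdjoint.of_nonneg (sub_nonneg.2 h)).add hr

lemma spectrum_subset_Ici_of_smul_one_le {r : ℝ} {a : 𝒜} (h : r • (1 : 𝒜) ≤ a) :
    spectrum ℝ a ⊆ Ici r := by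
  have ha := IsSelfAdjoint.of_smul_one_le h
  rw [← Algebra.algebraMap_eq_smul_one, algebraMap_le_iff_le_spectrum ha] at h
  exact h

lemma spectrum_subset_Icc_of_smul_one_le_s15 {r s : ℝ} {a : 𝒜} (h₁ : r • (1 : 𝒜) ≤ a)
    (h₂ : a ≤ s • (1 : 𝒜)) : spectrum ℝ a ⊆ Icc r s := by
  have ha := IsSelfAdjoint.of_smul_one_le h₁
  rw [← Algebra.algebraMap_eq_smul_one, le_algebraMap_iff_spectrum_le ha] at h₂
  exact fun t ht => ⟨spectrum_subset_Ici_of_smul_one_le h₁ ht, h₂ t ht⟩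

lemma continuousOn_log_spectrum {m : ℝ} {a : 𝒜} (hm : 0 < m) (h : m • (1 : 𝒜) ≤ a) :
    ContinuousOn log (spectrum ℝ a) :=
  continuousOn_log.mono fun _ ht =>
    (hm.trans_le (spectrum_subset_Ici_of_smul_one_le h ht)).ne'

lemma cfc_log_le_smul_add {m α : ℝ} {a : 𝒜} (hm : 0 < m) (h : m • (1 : 𝒜) ≤ a) (hα : 0 < α) :
    cfc log a ≤ α • a + (-1 - log α) • (1 : 𝒜) := by
  rw [← cfc_affine α _ (IsSelfAdjoint.of_smul_one_le h)]
  refine cfc_mono (fun t ht => ?_) (continuousOn_log_spectrum hm h)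
  have := log_le_mul_sub_one_sub_log hα (hm.trans_le (spectrum_subset_Ici_of_smul_one_le h ht))
  linarith

lemma logChord_le_cfc_log {m M : ℝ} {a : 𝒜} (hm : 0 < m) (hmM : m < M)
    (h₁ : m • (1 : 𝒜) ≤ a) (h₂ : a ≤ M • (1 : 𝒜)) :
    logChordSlope m M • a + logChordIntercept m M • (1 : 𝒜) ≤ cfc log a := by
  rw [← cfc_affine _ _ (IsSelfAdjoint.of_smul_one_le h₁)]
  refine cfc_mono (fun t ht => ?_) (hg := continuousOn_log_spectrum hm h₁)
  obtain ⟨hmt, htM⟩ := spectrum_subset_Icc_of_smul_one_le_s15 h₁ h₂ ht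
  exact logChord_le_log hm hmM hmt htM

end CStarAlgebra

theorem reverse_log_operator_general
    {𝒜 ℬ : Type*} [CStarAlgebra 𝒜] [PartialOrder 𝒜] [StarOrderedRing 𝒜]
    [CStarAlgebra ℬ] [PartialOrder ℬ] [StarOrderedRing ℬ]
    (n : ℕ) (m M : ℝ) (hm : 0 < m) (hmM : m < M)
    (Φ : 𝒜 →ₗ[ℂ] ℬ) (hΦ1 : Φ 1 = 1) (hΦpos : ∀ a : 𝒜, 0 ≤ a → 0 ≤ Φ a)
    (A : Fin n → 𝒜)
    (hAm : ∀ j, m • (1 : 𝒜) ≤ A j) (hAM : ∀ j, A j ≤ M • (1 : 𝒜))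
    (ω : Fin n → ℝ) (hω0 : ∀ j, 0 ≤ ω j) (hωsum : ∑ j, ω j = 1) :
    cfc Real.log (∑ j, ω j • Φ (A j)) ≤
      (Real.log ((Real.exp 1)⁻¹ * (M ^ m / m ^ M) ^ (1 / (M - m)) *
          ((M - m) / (Real.log M - Real.log m)))) • (1 : ℬ) +
        Φ (∑ j, ω j • cfc Real.log (A j)) := by
  set α := logChordSlope m M
  set β := logChordIntercept m M
  have hΦmono : Monotone Φ := (PositiveLinearMap.mk₀ Φ hΦpos).monotone'
  have hΦsmul_one (c : ℝ) : Φ (c • 1) = c • 1 := by rw [Φ.map_smul_of_tower, hΦ1]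
  set X := ∑ j, ω j • Φ (A j)
  have hXm : m • (1 : ℬ) ≤ X :=
    ((convex_Ici _).sum_mem (fun j _ => hω0 j) hωsum fun j _ =>
      hΦsmul_one m ▸ hΦmono (hAm j) :)
  have hchord : α • X + β • (1 : ℬ) ≤ Φ (∑ j, ω j • cfc log (A j)) := calc
    α • X + β • (1 : ℬ) = ∑ j, ω j • Φ (α • A j + β • 1) := by
      simp only [map_add, Φ.map_smul_of_tower, hΦ1, smul_add, Finset.sum_add_distrib,
        ← Finset.sum_smul, hωsum, one_smul, X, Finset.smul_sum, smul_comm α]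
    _ ≤ ∑ j, ω j • Φ (cfc log (A j)) := Finset.sum_le_sum fun j _ =>
      smul_le_smul_of_nonneg_left (hΦmono (logChord_le_cfc_log hm hmM (hAm j) (hAM j))) (hω0 j)
    _ = Φ (∑ j, ω j • cfc log (A j)) := by simp only [map_sum, Φ.map_smul_of_tower]
  rw [log_reverseConstant_eq hm hmM]
  calc cfc log X ≤ α • X + (-1 - log α) • (1 : ℬ) :=
        cfc_log_le_smul_add hm hXm (logChordSlope_pos hm hmM)
    _ = (-1 - β - log α) • (1 : ℬ) + (α • X + β • 1) := by module
    _ ≤ _ := by gcongr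

/-- A reverse operator inequality for the logarithm:
`log(∑ ω_j Φ(A_j)) ≤ log((1/e)·(M^m/m^M)^{1/(M-m)}·L(m,M))•1 + Φ(∑ ω_j log A_j)`. -/
theorem reverse_log_operator
    {𝒜 ℬ : Type*} [CStarAlgebra 𝒜] [PartialOrder 𝒜] [StarOrderedRing 𝒜]
    [CStarAlgebra ℬ] [PartialOrder ℬ] [StarOrderedRing ℬ]
    (n : ℕ) (m M : ℝ) (hm : 0 < m) (hmM : m < M)
    (Φ : 𝒜 →ₗ[ℂ] ℬ) (hΦ1 : Φ 1 = 1) (hΦpos : ∀ a : 𝒜, 0 ≤ a → 0 ≤ Φ a)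
    (A : Fin n → 𝒜) (hA : ∀ j, IsSelfAdjoint (A j))
    (hAm : ∀ j, m • (1 : 𝒜) ≤ A j) (hAM : ∀ j, A j ≤ M • (1 : 𝒜))
    (ω : Fin n → ℝ) (hω0 : ∀ j, 0 ≤ ω j) (hω1 : ∀ j, ω j ≤ 1) (hωsum : ∑ j, ω j = 1) :
    cfc Real.log (∑ j, ω j • Φ (A j)) ≤
      (Real.log ((Real.exp 1)⁻¹ * (M ^ m / m ^ M) ^ (1 / (M - m)) *
          ((M - m) / (Real.log M - Real.log m)))) • (1 : ℬ) +
        Φ (∑ j, ω j • cfc Real.log (A j)) :=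
  reverse_log_operator_general n m M hm hmM Φ hΦ1 hΦpos A hAm hAM ω hω0 hωsum
end

section
/- Let f be a strictly concave differentiable function on [m,M] with m < M, μ_f = (f(M)-f(m))/(M-m), ν_f = (Mf(m)-mf(M))/(M-m), and γ_f = max_{m ≤ t ≤ M} f(t)/(μ_f t + ν_f), assuming μ_f t + ν_f > 0 on [m,M]. Then for every unital positive linear map Φ and every self-adjoint operator A with spectrum in [m,M]: γ_f·Φ(f(A)) ≥ f(Φ(A)). -/
/-!
The chord `ℓ(t) = μ_f t + ν_f` of `f` over `[m, M]` satisfies `ℓ ≤ f ≤ γ ℓ` on `[m, M]`: the first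
inequality is concavity, the second the definition of `γ`. Since `ℓ` is affine,
`ℓ(Φ A) = Φ(ℓ(A))` for a unital linear `Φ`, and monotonicity of the functional calculus and of `Φ`
give `f(Φ A) ≤ γ ℓ(Φ A) = γ Φ(ℓ(A)) ≤ γ Φ(f(A))`.
-/

open Set

theorem ConcaveOn.chord_le_s16 {f : ℝ → ℝ} {m M : ℝ} (hmM : m < M) (hf : ConcaveOn ℝ (Icc m M) f)
    {t : ℝ} (ht : t ∈ Icc m M) :
    (f M - f m) / (M - m) * t + (M * f m - m * f M) / (M - m) ≤ f t := by
  have hMm : 0 < M - m := sub_pos.2 hmM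
  have hconcave := hf.2 (left_mem_Icc.2 hmM.le) (right_mem_Icc.2 hmM.le)
    (div_nonneg (sub_nonneg.2 ht.2) hMm.le) (div_nonneg (sub_nonneg.2 ht.1) hMm.le)
    (by field_simp; ring)
  have hpoint : ((M - t) / (M - m)) • m + ((t - m) / (M - m)) • M = t := by
    simp only [smul_eq_mul]; field_simp; ring
  rw [hpoint] at hconcave
  calc (f M - f m) / (M - m) * t + (M * f m - m * f M) / (M - m)
      = ((M - t) / (M - m)) • f m + ((t - m) / (M - m)) • f M := by
        simp only [smul_eq_mul]; field_simp; ring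
    _ ≤ f t := hconcave

section CFC

variable {R A : Type*} {p : A → Prop} [CommSemiring R] [StarRing R] [MetricSpace R]
  [IsTopologicalSemiring R] [ContinuousStar R] [TopologicalSpace A] [Ring A] [StarRing A]
  [Algebra R A] [ContinuousFunctionalCalculus R A p]

lemma cfc_const_mul_id_add_const (μ ν : R) (a : A) (ha : p a := by cfc_tac) :
    cfc (fun t : R => μ * t + ν) a = μ • a + algebraMap R A ν := by
  rw [cfc_add (a := a) (fun t : R => μ * t) (fun _ => ν), cfc_const_mul_id μ a, cfc_const ν a]

end CFC

lemma map_algebraMap_of_map_one {R S A B F : Type*} [CommSemiring R] [Semiring S] [Semiring A]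
    [Semiring B] [Algebra R A] [Algebra R B] [Module S A] [Module S B] [FunLike F A B]
    [LinearMapClass F S A B] [LinearMap.CompatibleSMul A B R S] {Φ : F} (hΦ1 : Φ 1 = 1) (r : R) :
    Φ (algebraMap R A r) = algebraMap R B r := by
  rw [Algebra.algebraMap_eq_smul_one, Algebra.algebraMap_eq_smul_one,
    LinearMapClass.map_smul_of_tower, hΦ1]

section UnitalPositiveMap

variable {𝒜 ℬ : Type*} [CStarAlgebra 𝒜] [PartialOrder 𝒜] [StarOrderedRing 𝒜]
  [CStarAlgebra ℬ] [PartialOrder ℬ] [StarOrderedRing ℬ]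

lemma PositiveLinearMap.spectrum_apply_subset_Icc {Φ : 𝒜 →ₚ[ℂ] ℬ} (hΦ1 : Φ 1 = 1)
    {a : 𝒜} (ha : IsSelfAdjoint a) {m M : ℝ} (hspec : spectrum ℝ a ⊆ Icc m M) :
    spectrum ℝ (Φ a) ⊆ Icc m M := by
  have hΦa : IsSelfAdjoint (Φ a) := ha.map' Φ
  have hΦalg := map_algebraMap_of_map_one (R := ℝ) hΦ1
  have hlow : algebraMap ℝ ℬ m ≤ Φ a := by
    rw [← hΦalg]
    exact OrderHomClass.mono Φ ((algebraMap_le_iff_le_spectrum ha).2 fun x hx => (hspec hx).1)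
  have hup : Φ a ≤ algebraMap ℝ ℬ M := by
    rw [← hΦalg]
    exact OrderHomClass.mono Φ ((le_algebraMap_iff_spectrum_le ha).2 fun x hx => (hspec hx).2)
  exact fun x hx => ⟨(algebraMap_le_iff_le_spectrum hΦa).1 hlow x hx,
    (le_algebraMap_iff_spectrum_le hΦa).1 hup x hx⟩

theorem PositiveLinearMap.cfc_apply_le_smul_apply_cfc {Φ : 𝒜 →ₚ[ℂ] ℬ} (hΦ1 : Φ 1 = 1)
    {a : 𝒜} (ha : IsSelfAdjoint a) {m M : ℝ} (hspec : spectrum ℝ a ⊆ Icc m M)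
    {f : ℝ → ℝ} (hf : ContinuousOn f (Icc m M)) {μ ν γ : ℝ} (hγ : 0 ≤ γ)
    (hlow : ∀ t ∈ Icc m M, μ * t + ν ≤ f t) (hup : ∀ t ∈ Icc m M, f t ≤ γ * (μ * t + ν)) :
    cfc f (Φ a) ≤ γ • Φ (cfc f a) := by
  have hspecΦ := Φ.spectrum_apply_subset_Icc hΦ1 ha hspec
  have hΦline : Φ (cfc (fun t : ℝ => μ * t + ν) a) = cfc (fun t : ℝ => μ * t + ν) (Φ a) := by
    rw [cfc_const_mul_id_add_const μ ν a ha, cfc_const_mul_id_add_const μ ν (Φ a) (ha.map' Φ),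
      map_add, Φ.map_smul_of_tower, map_algebraMap_of_map_one hΦ1]
  calc cfc f (Φ a) ≤ cfc (fun t : ℝ => γ * (μ * t + ν)) (Φ a) :=
        cfc_mono (fun t ht => hup t (hspecΦ ht)) (hf.mono hspecΦ)
    _ = γ • Φ (cfc (fun t : ℝ => μ * t + ν) a) := by rw [cfc_const_mul .., hΦline]
    _ ≤ γ • Φ (cfc f a) := by
        gcongr
        exact cfc_mono (fun t ht => hlow t (hspec ht)) (hf := by fun_prop) (hg := hf.mono hspec)

end UnitalPositiveMap

/-- Mond–Pečarić ratio-type reverse of the Choi–Davis–Jensen inequality: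
`f (Φ A) ≤ γ_f • Φ (f A)` for a strictly concave differentiable `f` on `[m, M]`. -/
theorem reverse_choi_davis_jensen_ratio
    {𝒜 ℬ : Type*} [CStarAlgebra 𝒜] [PartialOrder 𝒜] [StarOrderedRing 𝒜]
    [CStarAlgebra ℬ] [PartialOrder ℬ] [StarOrderedRing ℬ]
    (m M : ℝ) (hmM : m < M) (f : ℝ → ℝ)
    (hf_diff : ∀ t ∈ Set.Icc m M, DifferentiableAt ℝ f t)
    (hf_concave : StrictConcaveOn ℝ (Set.Icc m M) f)
    (hpos : ∀ t ∈ Set.Icc m M, 0 < (f M - f m) / (M - m) * t + (M * f m - m * f M) / (M - m))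
    (γ : ℝ)
    (hγ : IsGreatest ((fun t => f t /
        ((f M - f m) / (M - m) * t + (M * f m - m * f M) / (M - m))) '' Set.Icc m M) γ)
    (Φ : 𝒜 →ₗ[ℂ] ℬ) (hΦ1 : Φ 1 = 1) (hΦpos : ∀ a : 𝒜, 0 ≤ a → 0 ≤ Φ a)
    (A : 𝒜) (hA : IsSelfAdjoint A) (hspec : spectrum ℝ A ⊆ Set.Icc m M) :
    cfc f (Φ A) ≤ γ • Φ (cfc f A) := by
  have hchord : ∀ t ∈ Icc m M,
      (f M - f m) / (M - m) * t + (M * f m - m * f M) / (M - m) ≤ f t :=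
    fun t ht => hf_concave.concaveOn.chord_le_s16 hmM ht
  have hγ_bound : ∀ t ∈ Icc m M,
      f t ≤ γ * ((f M - f m) / (M - m) * t + (M * f m - m * f M) / (M - m)) :=
    fun t ht => (div_le_iff₀ (hpos t ht)).1 (hγ.2 ⟨t, ht, rfl⟩)
  have hγ_nonneg : 0 ≤ γ := by
    obtain ⟨t, ht, rfl⟩ := hγ.1
    exact div_nonneg ((hpos t ht).le.trans (hchord t ht)) (hpos t ht).le
  exact (PositiveLinearMap.mk₀ Φ hΦpos).cfc_apply_le_smul_apply_cfc hΦ1 hA hspec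
    (fun t ht => (hf_diff t ht).continuousAt.continuousWithinAt) hγ_nonneg hchord hγ_bound
end
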